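/- arXiv:2206.08650 — 3 statements merged into one kernel-verified Lean document; each statement's English description precedes it below -/
import Mathlib

section
/- Let (z_k) be a sequence of distinct points in ℂ∖{0} tending to ∞, and let f be an entire function whose zeros are exactly the points z_k, each simple. Let A₀ be an entire function with A₀(z_k) = −f''(z_k)/f'(z_k) for all k. Then there exists an entire function B₀ such that f'' + A₀ f' + B₀ f = 0 on ℂ; equivalently, the meromorphic function −(f'' + A₀ f')/f extends to an entire function. -/
open Filter Metric Complex
open scoped Topology

/-!
Put `h = f'' + A₀ f'`. The interpolation condition says exactly that `h` vanishes at every zero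
of `f`, and these zeros are simple, so `h / f` has only removable singularities: at a zero `c`,
`h u = (u - c) * dslope h c u` and `f u = (u - c) * dslope f c u` with `dslope f c c = f' c ≠ 0`.
Take `B₀ = -h / f`, extended by `-h' / f'` at the zeros of `f`.
-/

/-- At a simple zero of `f` where `g` vanishes, `g' / f'` is the limit of `g / f` (l'Hôpital). -/
noncomputable def divOrDerivDiv (g f : ℂ → ℂ) (w : ℂ) : ℂ :=
  if f w = 0 then deriv g w / deriv f w else g w / f w

lemma divOrDerivDiv_of_ne_zero {g f : ℂ → ℂ} {w : ℂ} (hw : f w ≠ 0) :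
    divOrDerivDiv g f w = g w / f w :=
  if_neg hw

lemma divOrDerivDiv_mul_self {g f : ℂ → ℂ} {w : ℂ} (hgf : f w = 0 → g w = 0) :
    divOrDerivDiv g f w * f w = g w := by
  by_cases hw : f w = 0
  · rw [hw, hgf hw, mul_zero]
  · rw [divOrDerivDiv_of_ne_zero hw, div_mul_cancel₀ _ hw]

lemma eq_sub_mul_dslope_of_eq_zero {f : ℂ → ℂ} {c : ℂ} (hc : f c = 0) (u : ℂ) :
    f u = (u - c) * dslope f c u := by
  simpa [hc, smul_eq_mul] using (sub_smul_dslope f c u).symm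

lemma divOrDerivDiv_eventuallyEq_dslope_div {g f : ℂ → ℂ} {c : ℂ} {s : Set ℂ} (hs : s ∈ 𝓝 c)
    (hf : DifferentiableOn ℂ f s) (hfc : f c = 0) (hgc : g c = 0) (hf'c : deriv f c ≠ 0) :
    divOrDerivDiv g f =ᶠ[𝓝 c] fun u => dslope g c u / dslope f c u := by
  have hF : ContinuousAt (dslope f c) c :=
    (((differentiableOn_dslope hs).mpr hf).differentiableAt hs).continuousAt
  have hFc : dslope f c c ≠ 0 := by rwa [dslope_same]
  filter_upwards [hF.eventually_ne hFc] with u hFu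
  rcases eq_or_ne u c with rfl | huc
  · simp only [divOrDerivDiv, hfc, if_true, dslope_same]
  · have hsub : u - c ≠ 0 := sub_ne_zero.mpr huc
    have hfu : f u ≠ 0 := by
      rw [eq_sub_mul_dslope_of_eq_zero hfc u]
      exact mul_ne_zero hsub hFu
    rw [divOrDerivDiv_of_ne_zero hfu, eq_sub_mul_dslope_of_eq_zero hfc u,
      eq_sub_mul_dslope_of_eq_zero hgc u, mul_div_mul_left _ _ hsub]

lemma differentiableAt_divOrDerivDiv_of_simple_zero {g f : ℂ → ℂ} {c : ℂ} {s : Set ℂ}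
    (hs : s ∈ 𝓝 c) (hg : DifferentiableOn ℂ g s) (hf : DifferentiableOn ℂ f s)
    (hfc : f c = 0) (hgc : g c = 0) (hf'c : deriv f c ≠ 0) :
    DifferentiableAt ℂ (divOrDerivDiv g f) c := by
  have hG := ((differentiableOn_dslope hs).mpr hg).differentiableAt hs
  have hF := ((differentiableOn_dslope hs).mpr hf).differentiableAt hs
  have hFc : dslope f c c ≠ 0 := by rwa [dslope_same]
  exact (hG.div hF hFc).congr_of_eventuallyEq
    (divOrDerivDiv_eventuallyEq_dslope_div hs hf hfc hgc hf'c)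

lemma differentiableAt_divOrDerivDiv_of_ne_zero {g f : ℂ → ℂ} {w : ℂ}
    (hg : DifferentiableAt ℂ g w) (hf : DifferentiableAt ℂ f w) (hw : f w ≠ 0) :
    DifferentiableAt ℂ (divOrDerivDiv g f) w := by
  refine (hg.div hf hw).congr_of_eventuallyEq ?_
  filter_upwards [hf.continuousAt.eventually_ne hw] with u hu
  exact divOrDerivDiv_of_ne_zero hu

theorem differentiable_divOrDerivDiv {g f : ℂ → ℂ} (hg : Differentiable ℂ g)
    (hf : Differentiable ℂ f) (hgf : ∀ w, f w = 0 → g w = 0)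
    (hsimple : ∀ w, f w = 0 → deriv f w ≠ 0) :
    Differentiable ℂ (divOrDerivDiv g f) := by
  intro w
  by_cases hw : f w = 0
  · exact differentiableAt_divOrDerivDiv_of_simple_zero univ_mem hg.differentiableOn
      hf.differentiableOn hw (hgf w hw) (hsimple w hw)
  · exact differentiableAt_divOrDerivDiv_of_ne_zero (hg w) (hf w) hw

theorem stmt5_general
    (z : ℕ → ℂ)
    (f : ℂ → ℂ) (hf : Differentiable ℂ f)
    (hzeros : ∀ w : ℂ, f w = 0 ↔ ∃ k, w = z k)
    (hsimple : ∀ k, deriv f (z k) ≠ 0)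
    (A₀ : ℂ → ℂ) (hA₀ : Differentiable ℂ A₀)
    (hA₀val : ∀ k, A₀ (z k) = -(deriv (deriv f) (z k) / deriv f (z k))) :
    ∃ B₀ : ℂ → ℂ, Differentiable ℂ B₀ ∧
      (∀ w : ℂ, deriv (deriv f) w + A₀ w * deriv f w + B₀ w * f w = 0) ∧
      ∀ w : ℂ, f w ≠ 0 → B₀ w = -((deriv (deriv f) w + A₀ w * deriv f w) / f w) := by
  set h : ℂ → ℂ := fun w => deriv (deriv f) w + A₀ w * deriv f w
  have hh : Differentiable ℂ h := hf.deriv.deriv.add (hA₀.mul hf.deriv)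
  have hf_simple : ∀ w, f w = 0 → deriv f w ≠ 0 := by
    rintro w hw
    obtain ⟨k, rfl⟩ := (hzeros w).mp hw
    exact hsimple k
  have hh_zero : ∀ w, f w = 0 → h w = 0 := by
    rintro w hw
    obtain ⟨k, rfl⟩ := (hzeros w).mp hw
    simp only [h, hA₀val k, neg_mul, div_mul_cancel₀ _ (hsimple k), add_neg_cancel]
  refine ⟨fun w => -divOrDerivDiv h f w, (differentiable_divOrDerivDiv hh hf hh_zero hf_simple).neg,
    fun w => ?_, fun w hw => by simp only [divOrDerivDiv_of_ne_zero hw, h]⟩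
  rw [neg_mul, divOrDerivDiv_mul_self (hh_zero w), add_neg_cancel]

theorem stmt5
    (z : ℕ → ℂ) (hz_inj : Function.Injective z) (hz0 : ∀ k, z k ≠ 0)
    (hz_inf : Tendsto (fun k => ‖z k‖) atTop atTop)
    (f : ℂ → ℂ) (hf : Differentiable ℂ f)
    (hzeros : ∀ w : ℂ, f w = 0 ↔ ∃ k, w = z k)
    (hsimple : ∀ k, deriv f (z k) ≠ 0)
    (A₀ : ℂ → ℂ) (hA₀ : Differentiable ℂ A₀)
    (hA₀val : ∀ k, A₀ (z k) = -(deriv (deriv f) (z k) / deriv f (z k))) :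
    ∃ B₀ : ℂ → ℂ, Differentiable ℂ B₀ ∧
      (∀ w : ℂ, deriv (deriv f) w + A₀ w * deriv f w + B₀ w * f w = 0) ∧
      ∀ w : ℂ, f w ≠ 0 → B₀ w = -((deriv (deriv f) w + A₀ w * deriv f w) / f w) :=
  stmt5_general z f hf hzeros hsimple A₀ hA₀ hA₀val
end

section
/- Let (z_k) be a sequence of distinct points in ℂ∖{0} tending to ∞ whose exponent of convergence is at most σ < 1, let f(z) = ∏_{k=1}^∞ (1 − z/z_k) be the canonical product over (z_k), and let (u_k) be a sequence in ℂ with ∑_{k=1}^∞ |u_k/z_k| < ∞. Then the function A₀(z) = f(z) · ∑_{k=1}^∞ u_k/(z − z_k) extends to an entire function of order at most σ. -/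
open Filter Metric Complex

/-- The maximum modulus `M(r, f) = max_{|z| = r} |f z|` of an entire function. -/
noncomputable def maxModulus (f : ℂ → ℂ) (r : ℝ) : ℝ :=
  sSup ((fun z => ‖f z‖) '' Metric.sphere (0 : ℂ) r)

/-- The order `limsup_{r → ∞} log log M(r, f) / log r` of an entire function. -/
noncomputable def entireOrder (f : ℂ → ℂ) : ℝ :=
  Filter.limsup
    (fun r : ℝ => Real.log (Real.log (maxModulus f r)) / Real.log r) Filter.atTop

/-- The exponent of convergence `inf { t > 0 : ∑ₖ |z_k|^(-t) < ∞ }` of a sequence. -/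
noncomputable def expConv (z : ℕ → ℂ) : ℝ :=
  sInf {t : ℝ | 0 < t ∧ Summable (fun k => ‖z k‖ ^ (-t))}

open Topology

/-!
Write `A₀ = ∑ₖ uₖ · dslope f zₖ`; off the `zₖ` this is `f(w) ∑ₖ uₖ / (w - zₖ)` because
`f (zₖ) = 0`, and each summand is entire. Dropping the factor `1 - w / zₖ` from the product gives
`|dslope f zₖ w| ≤ exp (Q |w|^t / t) / |zₖ|` whenever `Q = ∑ |zⱼ|^(-t) < ∞` and `0 < t ≤ 1`,
using `1 + x ≤ exp (x^t / t)`. With `∑ |uₖ / zₖ| < ∞` this makes the series locally uniformly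
convergent and gives `|A₀ w| ≤ C exp (Q |w|^t / t)`, i.e. order at most `t`, for every `t ∈ (σ, 1)`.

Since `expConv` is `0` when no exponent works, the convergence of the product must itself supply
some exponent: at a point `w ≠ 0` with `f w ≠ 0 ≠ f (I w)`, summability of `log |1 - w / zₖ|` and
`log |1 - I w / zₖ|`, which control the real and imaginary parts of `w / zₖ`, forces
`∑ |1 / zₖ| < ∞`.
-/

lemma one_add_le_exp_rpow_div {x t : ℝ} (hx : 0 ≤ x) (ht0 : 0 < t) (ht1 : t ≤ 1) :
    1 + x ≤ Real.exp (x ^ t / t) := by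
  have h : (1 + x) ^ t ≤ Real.exp (x ^ t) :=
    calc (1 + x) ^ t ≤ 1 ^ t + x ^ t := Real.rpow_add_le_add_rpow zero_le_one hx ht0.le ht1
      _ = x ^ t + 1 := by rw [Real.one_rpow, add_comm]
      _ ≤ Real.exp (x ^ t) := Real.add_one_le_exp _
  calc 1 + x = ((1 + x) ^ t) ^ t⁻¹ := (Real.rpow_rpow_inv (by positivity) ht0.ne').symm
    _ ≤ Real.exp (x ^ t) ^ t⁻¹ := Real.rpow_le_rpow (by positivity) h (by positivity)
    _ = Real.exp (x ^ t / t) := by rw [← Real.exp_mul, div_eq_mul_inv]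

theorem HasProd.apply_ne_zero {ι α : Type*} [CommMonoidWithZero α] [TopologicalSpace α] [T2Space α]
    {g : ι → α} {L : α} (h : HasProd g L) (hL : L ≠ 0) (j : ι) : g j ≠ 0 :=
  fun hj => hL (h.unique (hasProd_zero_of_exists_eq_zero ⟨j, hj⟩))

theorem HasProd.summable_log_norm {ι E : Type*} [NormedCommRing E] [NormMulClass E] [NormOneClass E]
    {g : ι → E} {L : E} (h : HasProd g L) (hL : L ≠ 0) :
    Summable fun j => Real.log ‖g j‖ := by
  refine ⟨Real.log ‖L‖, ?_⟩
  have hlog := (Real.continuousAt_log (norm_ne_zero_iff.2 hL)).tendsto.comp h.norm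
  refine hlog.congr fun s => ?_
  exact Real.log_prod fun j _ => norm_ne_zero_iff.2 (h.apply_ne_zero hL j)

lemma abs_log_norm_one_sub_add_re_le {b : ℂ} (hb : ‖b‖ ≤ 1 / 2) :
    |Real.log ‖1 - b‖ + b.re| ≤ ‖b‖ ^ 2 := by
  have hlog := norm_log_one_add_sub_self_le (z := -b) (by rw [norm_neg]; linarith)
  rw [norm_neg] at hlog
  calc |Real.log ‖1 - b‖ + b.re| = |(Complex.log (1 + -b) - -b).re| := by
        rw [sub_re, log_re, neg_re, ← sub_eq_add_neg, sub_neg_eq_add]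
    _ ≤ ‖Complex.log (1 + -b) - -b‖ := abs_re_le_norm _
    _ ≤ ‖b‖ ^ 2 * (1 - ‖b‖)⁻¹ / 2 := hlog
    _ ≤ ‖b‖ ^ 2 := by
        have : (1 - ‖b‖)⁻¹ ≤ 2 := by
          rw [inv_le_comm₀ (by linarith) two_pos]; linarith
        nlinarith [sq_nonneg ‖b‖]

lemma norm_le_two_mul_abs_log_norm {a : ℂ} (ha : ‖a‖ ≤ 1 / 8) :
    ‖a‖ ≤ 2 * (|Real.log ‖1 - a‖| + |Real.log ‖1 - I * a‖|) := by
  have hre := abs_log_norm_one_sub_add_re_le (b := a) (by linarith)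
  have him := abs_log_norm_one_sub_add_re_le (b := I * a) (by rw [norm_mul, norm_I]; linarith)
  rw [norm_mul, norm_I, one_mul, I_mul_re] at him
  have hsq : ‖a‖ ^ 2 ≤ ‖a‖ / 8 := by nlinarith [norm_nonneg a]
  have := norm_le_abs_re_add_abs_im a
  have h1 := abs_le.1 hre
  have h2 := abs_le.1 him
  cases abs_cases a.re <;> cases abs_cases a.im <;>
    cases abs_cases (Real.log ‖1 - a‖) <;> cases abs_cases (Real.log ‖1 - I * a‖) <;> linarith

lemma summable_norm_of_summable_log_norm {ι : Type*} {a : ι → ℂ} (ha : Tendsto a cofinite (𝓝 0))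
    (h₁ : Summable fun j => Real.log ‖1 - a j‖) (h₂ : Summable fun j => Real.log ‖1 - I * a j‖) :
    Summable fun j => ‖a j‖ := by
  refine Summable.of_norm_bounded_eventually ((h₁.abs.add h₂.abs).mul_left 2) ?_
  have hsmall : ∀ᶠ j in cofinite, ‖a j‖ ≤ 1 / 8 :=
    (tendsto_zero_iff_norm_tendsto_zero.1 ha).eventually (eventually_le_nhds (by norm_num))
  filter_upwards [hsmall] with j hj
  rw [norm_norm]
  exact norm_le_two_mul_abs_log_norm hj

theorem norm_le_mul_exp_tsum_of_hasProd {ι E : Type*} [DecidableEq ι] [SeminormedCommRing E]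
    [NormMulClass E] [NormOneClass E] {g : ι → E} {L : E} {b : ι → ℝ} (h : HasProd g L)
    (hb : Summable b) (hb0 : ∀ j, 0 ≤ b j) (hg : ∀ j, ‖g j‖ ≤ Real.exp (b j)) (k : ι) :
    ‖L‖ ≤ ‖g k‖ * Real.exp (∑' j, b j) := by
  refine le_of_tendsto h.norm ?_
  filter_upwards [eventually_ge_atTop {k}] with s hs
  rw [← Finset.mul_prod_erase s _ (Finset.singleton_subset_iff.1 hs)]
  gcongr
  calc ∏ j ∈ s.erase k, ‖g j‖ ≤ ∏ j ∈ s.erase k, Real.exp (b j) :=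
        Finset.prod_le_prod (fun j _ => norm_nonneg _) (fun j _ => hg j)
    _ = Real.exp (∑ j ∈ s.erase k, b j) := (Real.exp_sum _ _).symm
    _ ≤ Real.exp (∑' j, b j) := Real.exp_le_exp.2 (hb.sum_le_tsum _ fun j _ => hb0 j)

theorem Differentiable.dslope {f : ℂ → ℂ} (hf : Differentiable ℂ f) (a : ℂ) :
    Differentiable ℂ (dslope f a) :=
  differentiableOn_univ.1 ((differentiableOn_dslope univ_mem).2 hf.differentiableOn)

lemma expConv_nonneg (z : ℕ → ℂ) : 0 ≤ expConv z :=
  Real.sInf_nonneg fun _ ht => ht.1.le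

lemma summable_rpow_neg_of_expConv_lt {z : ℕ → ℂ} (hz_inf : Tendsto (fun k => ‖z k‖) atTop atTop)
    (hz_inv : Summable fun k => ‖z k‖⁻¹) {t : ℝ} (ht : expConv z < t) :
    Summable fun k => ‖z k‖ ^ (-t) := by
  have hne : {s : ℝ | 0 < s ∧ Summable fun k => ‖z k‖ ^ (-s)}.Nonempty :=
    ⟨1, one_pos, by simpa only [Real.rpow_neg_one] using hz_inv⟩
  obtain ⟨s, ⟨-, hs⟩, hst⟩ := exists_lt_of_csInf_lt hne ht
  refine Summable.of_norm_bounded_eventually hs ?_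
  rw [Nat.cofinite_eq_atTop]
  filter_upwards [hz_inf.eventually_ge_atTop 1] with k hk
  rw [Real.norm_of_nonneg (by positivity)]
  exact Real.rpow_le_rpow_of_exponent_le hk (neg_le_neg hst.le)

section CanonicalProduct

variable {z : ℕ → ℂ} {f : ℂ → ℂ} (hprod : ∀ w, HasProd (fun k => 1 - w / z k) (f w))
include hprod

lemma summable_norm_inv_of_hasProd (hz_inf : Tendsto (fun k => ‖z k‖) atTop atTop)
    (hf : ContinuousAt f 0) : Summable fun k => ‖z k‖⁻¹ := by
  have hf0 : f 0 = 1 := (hprod 0).unique (by simp)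
  obtain ⟨ε, hε, hfε⟩ := Metric.eventually_nhds_iff.1 (hf.eventually_ne (hf0 ▸ one_ne_zero))
  obtain ⟨w, hw0, hfw, hfIw⟩ : ∃ w : ℂ, w ≠ 0 ∧ f w ≠ 0 ∧ f (I * w) ≠ 0 := by
    have hw : ‖((ε / 2 : ℝ) : ℂ)‖ < ε := by
      rw [norm_real, Real.norm_of_nonneg (by positivity)]; linarith
    refine ⟨((ε / 2 : ℝ) : ℂ), ?_, hfε ?_, hfε ?_⟩
    · exact ofReal_ne_zero.2 (by positivity)
    · rwa [dist_zero_right]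
    · rwa [dist_zero_right, norm_mul, norm_I, one_mul]
  have hsmall : Tendsto (fun k => w / z k) cofinite (𝓝 0) := by
    rw [Nat.cofinite_eq_atTop, tendsto_zero_iff_norm_tendsto_zero]
    simpa [norm_div, div_eq_mul_inv] using hz_inf.inv_tendsto_atTop.const_mul ‖w‖
  have hlog₁ := (hprod w).summable_log_norm hfw
  have hlog₂ := (hprod (I * w)).summable_log_norm hfIw
  simp only [mul_div_assoc] at hlog₂
  have hsum := summable_norm_of_summable_log_norm hsmall hlog₁ hlog₂
  simp only [div_eq_mul_inv, norm_mul, norm_inv] at hsum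
  exact (summable_mul_left_iff (norm_ne_zero_iff.2 hw0)).1 hsum

lemma apply_eq_zero_of_hasProd {k : ℕ} (hz0 : z k ≠ 0) : f (z k) = 0 :=
  (hprod (z k)).unique (hasProd_zero_of_exists_eq_zero ⟨k, by simp [hz0]⟩)

lemma norm_le_mul_exp_of_hasProd {t : ℝ} (ht0 : 0 < t) (ht1 : t ≤ 1)
    (hq : Summable fun j => ‖z j‖ ^ (-t)) (w : ℂ) (k : ℕ) :
    ‖f w‖ ≤ ‖1 - w / z k‖ * Real.exp ((∑' j, ‖z j‖ ^ (-t)) / t * ‖w‖ ^ t) := by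
  have hfactor : ∀ j, ‖1 - w / z j‖ ≤ Real.exp (‖z j‖ ^ (-t) / t * ‖w‖ ^ t) := fun j =>
    calc ‖1 - w / z j‖ ≤ 1 + ‖w‖ / ‖z j‖ := by simpa [norm_div] using norm_sub_le (1 : ℂ) (w / z j)
      _ ≤ Real.exp ((‖w‖ / ‖z j‖) ^ t / t) := one_add_le_exp_rpow_div (by positivity) ht0 ht1
      _ = Real.exp (‖z j‖ ^ (-t) / t * ‖w‖ ^ t) := by
        rw [Real.div_rpow (norm_nonneg _) (norm_nonneg _), Real.rpow_neg (norm_nonneg _)]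
        congr 1
        ring
  have h := norm_le_mul_exp_tsum_of_hasProd (hprod w) ((hq.div_const t).mul_right _)
    (fun j => by positivity) hfactor k
  rwa [tsum_mul_right, tsum_div_const] at h

lemma norm_dslope_le_of_hasProd (hf : Differentiable ℂ f) {k : ℕ} (hz0 : z k ≠ 0) {t : ℝ}
    (ht0 : 0 < t) (ht1 : t ≤ 1) (hq : Summable fun j => ‖z j‖ ^ (-t)) (w : ℂ) :
    ‖dslope f (z k) w‖ ≤ Real.exp ((∑' j, ‖z j‖ ^ (-t)) / t * ‖w‖ ^ t) / ‖z k‖ := by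
  have hclosed : IsClosed {w | ‖dslope f (z k) w‖ ≤
      Real.exp ((∑' j, ‖z j‖ ^ (-t)) / t * ‖w‖ ^ t) / ‖z k‖} := by
    exact isClosed_le (hf.dslope (z k)).continuous.norm
      ((continuous_const.mul (continuous_norm.rpow_const fun _ => Or.inr ht0.le)).rexp.div_const _)
  suffices h : {z k}ᶜ ⊆ {w | ‖dslope f (z k) w‖ ≤
      Real.exp ((∑' j, ‖z j‖ ^ (-t)) / t * ‖w‖ ^ t) / ‖z k‖} from
    closure_minimal h hclosed ((dense_compl_singleton (z k)).closure_eq.ge (Set.mem_univ w))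
  intro w hw
  have hwz : w - z k ≠ 0 := sub_ne_zero.2 hw
  have hfactor : ‖1 - w / z k‖ = ‖w - z k‖ / ‖z k‖ := by
    rw [one_sub_div hz0, norm_div, norm_sub_rev]
  have hfw := norm_le_mul_exp_of_hasProd hprod ht0 ht1 hq w k
  rw [hfactor] at hfw
  rw [Set.mem_ofPred_eq, dslope_of_ne _ hw, slope_def_field, apply_eq_zero_of_hasProd hprod hz0,
    sub_zero, norm_div, div_le_iff₀ (norm_pos_iff.2 hwz)]
  calc ‖f w‖ ≤ ‖w - z k‖ / ‖z k‖ * Real.exp ((∑' j, ‖z j‖ ^ (-t)) / t * ‖w‖ ^ t) := hfw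
    _ = _ := by ring

lemma norm_mul_dslope_le_of_hasProd (hf : Differentiable ℂ f) {k : ℕ} (hz0 : z k ≠ 0) {t : ℝ}
    (ht0 : 0 < t) (ht1 : t ≤ 1) (hq : Summable fun j => ‖z j‖ ^ (-t)) (c w : ℂ) :
    ‖c * dslope f (z k) w‖ ≤ ‖c / z k‖ * Real.exp ((∑' j, ‖z j‖ ^ (-t)) / t * ‖w‖ ^ t) :=
  calc ‖c * dslope f (z k) w‖ = ‖c‖ * ‖dslope f (z k) w‖ := norm_mul _ _
    _ ≤ ‖c‖ * (Real.exp ((∑' j, ‖z j‖ ^ (-t)) / t * ‖w‖ ^ t) / ‖z k‖) := by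
      gcongr; exact norm_dslope_le_of_hasProd hprod hf hz0 ht0 ht1 hq w
    _ = ‖c / z k‖ * Real.exp ((∑' j, ‖z j‖ ^ (-t)) / t * ‖w‖ ^ t) := by
      rw [norm_div]; ring

end CanonicalProduct

lemma differentiable_tsum_of_norm_le_mul {ι : Type*} {F : ι → ℂ → ℂ} {a : ι → ℝ} {B : ℂ → ℝ}
    (hF : ∀ i, Differentiable ℂ (F i)) (ha : Summable a) (ha0 : ∀ i, 0 ≤ a i)
    (hB : Continuous B) (hle : ∀ i w, ‖F i w‖ ≤ a i * B w) :
    Differentiable ℂ fun w => ∑' i, F i w := by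
  intro w₀
  obtain ⟨C, hC⟩ := (isCompact_closedBall w₀ 1).exists_bound_of_continuousOn hB.continuousOn
  have hdiff := differentiableOn_tsum_of_summable_norm (ha.mul_right C)
    (fun i => (hF i).differentiableOn) isOpen_ball fun i w hw =>
      (hle i w).trans (mul_le_mul_of_nonneg_left
        ((le_abs_self _).trans (hC w (ball_subset_closedBall hw))) (ha0 i))
  exact hdiff.differentiableAt (ball_mem_nhds w₀ one_pos)

lemma maxModulus_le {F : ℂ → ℂ} {r B : ℝ} (hB : 0 ≤ B) (h : ∀ w, ‖w‖ = r → ‖F w‖ ≤ B) :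
    maxModulus F r ≤ B :=
  Real.sSup_le (by rintro _ ⟨w, hw, rfl⟩; exact h w (by simpa using hw)) hB

lemma norm_le_maxModulus {F : ℂ → ℂ} (hF : Differentiable ℂ F) {w : ℂ} {r : ℝ} (hw : ‖w‖ < r) :
    ‖F w‖ ≤ maxModulus F r := by
  have hr : r ≠ 0 := (lt_of_le_of_lt (norm_nonneg w) hw).ne'
  have hbdd : BddAbove ((fun z => ‖F z‖) '' sphere 0 r) :=
    (isCompact_sphere 0 r).bddAbove_image hF.continuous.norm.continuousOn
  refine Complex.norm_le_of_forall_mem_frontier_norm_le isBounded_ball hF.diffContOnCl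
    (fun y hy => le_csSup hbdd ⟨y, by rwa [frontier_ball (0 : ℂ) hr] at hy, rfl⟩)
    (subset_closure (mem_ball_zero_iff.2 hw))

-- `Real.log (Real.log M)` is `log |log M|`, which is large when `M` is tiny: hence the lower bound.
lemma eventually_log_log_div_log_le {M : ℝ → ℝ} {m C c t t' : ℝ} (hm : 0 < m) (hc : 0 ≤ c)
    (ht : 0 ≤ t) (htt' : t < t') (hM : ∀ᶠ r in atTop, m ≤ M r ∧ M r ≤ C * Real.exp (c * r ^ t)) :
    ∀ᶠ r in atTop, Real.log (Real.log (M r)) / Real.log r ≤ t' := by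
  set K := |Real.log m| + |Real.log C| + 1 with hK_def
  have hK : 1 ≤ K := by linarith [abs_nonneg (Real.log m), abs_nonneg (Real.log C)]
  have hlarge : ∀ᶠ r in atTop, Real.log (K + c) ≤ (t' - t) * Real.log r := by
    filter_upwards [Real.tendsto_log_atTop.eventually_ge_atTop (Real.log (K + c) / (t' - t))]
      with r hr
    rwa [div_le_iff₀ (by linarith), mul_comm] at hr
  filter_upwards [hM, hlarge, eventually_gt_atTop 1] with r ⟨hmM, hMC⟩ hlarge hr
  have hM0 : 0 < M r := hm.trans_le hmM
  have hC : 0 < C := pos_of_mul_pos_left (hM0.trans_le hMC) (Real.exp_pos _).le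
  have hrt : 1 ≤ r ^ t := Real.one_le_rpow hr.le ht
  have hlogM : |Real.log (M r)| ≤ K + c * r ^ t := by
    have hup : Real.log (M r) ≤ Real.log C + c * r ^ t := by
      rw [← Real.log_exp (c * r ^ t), ← Real.log_mul hC.ne' (Real.exp_pos _).ne']
      exact Real.log_le_log hM0 hMC
    have hlow : Real.log m ≤ Real.log (M r) := Real.log_le_log hm hmM
    rw [abs_le]
    constructor <;> linarith [neg_abs_le (Real.log m), le_abs_self (Real.log C),
      abs_nonneg (Real.log m), abs_nonneg (Real.log C), mul_nonneg hc (zero_le_one.trans hrt)]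
  have hloglog : Real.log (Real.log (M r)) ≤ Real.log (K + c) + t * Real.log r := by
    calc Real.log (Real.log (M r)) ≤ Real.log (K + c * r ^ t) := by
          rw [← Real.log_abs]
          rcases eq_or_ne (Real.log (M r)) 0 with h | h
          · rw [h, abs_zero, Real.log_zero]
            exact Real.log_nonneg (by nlinarith)
          · exact Real.log_le_log (abs_pos.2 h) hlogM
      _ ≤ Real.log ((K + c) * r ^ t) := Real.log_le_log (by positivity) (by nlinarith)
      _ = Real.log (K + c) + t * Real.log r := by
          rw [Real.log_mul (by positivity) (by positivity), Real.log_rpow (by linarith)]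
  rw [div_le_iff₀ (Real.log_pos hr)]
  linarith

lemma entireOrder_le_of_eventually_le {F : ℂ → ℂ} {t : ℝ} (ht : 0 ≤ t)
    (h : ∀ t' > t, ∀ᶠ r in atTop, Real.log (Real.log (maxModulus F r)) / Real.log r ≤ t') :
    entireOrder F ≤ t := by
  refine le_of_forall_gt_imp_ge_of_dense fun t' ht' => ?_
  by_cases hcob : IsCoboundedUnder (· ≤ ·) atTop
      fun r => Real.log (Real.log (maxModulus F r)) / Real.log r
  · exact limsup_le_of_le hcob (h t' ht')
  · rw [entireOrder, Real.limsup_of_not_isCoboundedUnder hcob]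
    linarith

lemma entireOrder_le_of_norm_le_mul_exp {F : ℂ → ℂ} (hF : Differentiable ℂ F) {C c t : ℝ}
    (hc : 0 ≤ c) (ht : 0 ≤ t) (hbound : ∀ w, ‖F w‖ ≤ C * Real.exp (c * ‖w‖ ^ t)) :
    entireOrder F ≤ t := by
  refine entireOrder_le_of_eventually_le ht fun t' ht' => ?_
  rcases em (∃ w₀, F w₀ ≠ 0) with ⟨w₀, hw₀⟩ | hzero
  · have hC : 0 < C := pos_of_mul_pos_left ((norm_pos_iff.2 hw₀).trans_le (hbound w₀)) (by positivity)
    refine eventually_log_log_div_log_le (C := C) (norm_pos_iff.2 hw₀) hc ht ht' ?_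
    filter_upwards [eventually_gt_atTop ‖w₀‖] with r hr
    exact ⟨norm_le_maxModulus hF hr, maxModulus_le (by positivity) fun w hw => hw ▸ hbound w⟩
  · rw [not_exists_not] at hzero
    filter_upwards with r
    have hM : maxModulus F r = 0 :=
      le_antisymm (maxModulus_le le_rfl fun w _ => by simp [hzero w]) (Real.sSup_nonneg (by
        rintro _ ⟨w, -, rfl⟩; exact norm_nonneg _))
    rw [hM, Real.log_zero, Real.log_zero, zero_div]
    linarith

theorem stmt6_general
    (z : ℕ → ℂ) (hz0 : ∀ k, z k ≠ 0)
    (hz_inf : Tendsto (fun k => ‖z k‖) atTop atTop)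
    (σ : ℝ) (hσ : expConv z ≤ σ) (hσ1 : σ < 1)
    (f : ℂ → ℂ) (hf : Differentiable ℂ f)
    (hprod : ∀ w : ℂ, HasProd (fun k => 1 - w / z k) (f w))
    (u : ℕ → ℂ) (hsum : Summable (fun k => ‖u k / z k‖)) :
    ∃ A₀ : ℂ → ℂ, Differentiable ℂ A₀ ∧ entireOrder A₀ ≤ σ ∧
      ∀ w : ℂ, (∀ k, w ≠ z k) → A₀ w = f w * ∑' k, u k / (w - z k) := by
  have hz_inv := summable_norm_inv_of_hasProd hprod hz_inf hf.continuous.continuousAt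
  have hterm {t : ℝ} (ht0 : 0 < t) (ht1 : t ≤ 1) (hq : Summable fun j => ‖z j‖ ^ (-t)) (k : ℕ)
      (w : ℂ) := norm_mul_dslope_le_of_hasProd hprod hf (hz0 k) ht0 ht1 hq (u k) w
  have hA : Differentiable ℂ fun w => ∑' k, u k * dslope f (z k) w :=
    differentiable_tsum_of_norm_le_mul (fun k => (hf.dslope (z k)).const_mul (u k)) hsum
      (fun _ => norm_nonneg _)
      (continuous_const.mul (continuous_norm.rpow_const fun _ => Or.inr zero_le_one)).rexp
      (hterm one_pos le_rfl (by simpa only [Real.rpow_neg_one] using hz_inv))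
  refine ⟨fun w => ∑' k, u k * dslope f (z k) w, hA, ?_, fun w hw => ?_⟩
  · refine le_of_forall_gt_imp_ge_of_dense fun a ha => ?_
    set t := min a ((σ + 1) / 2)
    have hσt : σ < t := lt_min ha (by linarith)
    have ht0 : 0 < t := ((expConv_nonneg z).trans hσ).trans_lt hσt
    have ht1 : t ≤ 1 := (min_le_right _ _).trans (by linarith)
    have hq := summable_rpow_neg_of_expConv_lt hz_inf hz_inv (hσ.trans_lt hσt)
    calc entireOrder _ ≤ t := entireOrder_le_of_norm_le_mul_exp hA (by positivity) ht0.le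
          fun w => tsum_of_norm_bounded (hsum.hasSum.mul_right _) (hterm ht0 ht1 hq · w)
      _ ≤ a := min_le_left _ _
  · rw [← tsum_mul_left]
    refine tsum_congr fun k => ?_
    rw [dslope_of_ne _ (hw k), slope_def_field, apply_eq_zero_of_hasProd hprod (hz0 k)]
    ring

theorem stmt6
    (z : ℕ → ℂ) (hz_inj : Function.Injective z) (hz0 : ∀ k, z k ≠ 0)
    (hz_inf : Tendsto (fun k => ‖z k‖) atTop atTop)
    (σ : ℝ) (hσ : expConv z ≤ σ) (hσ1 : σ < 1)
    (f : ℂ → ℂ) (hf : Differentiable ℂ f)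
    (hprod : ∀ w : ℂ, HasProd (fun k => 1 - w / z k) (f w))
    (u : ℕ → ℂ) (hsum : Summable (fun k => ‖u k / z k‖)) :
    ∃ A₀ : ℂ → ℂ, Differentiable ℂ A₀ ∧ entireOrder A₀ ≤ σ ∧
      ∀ w : ℂ, (∀ k, w ≠ z k) → A₀ w = f w * ∑' k, u k / (w - z k) :=
  stmt6_general z hz0 hz_inf σ hσ hσ1 f hf hprod u hsum
end

section
/- Let (r_k) be an increasing sequence of positive numbers and (n_k) a sequence of natural numbers such that for every R > 0 the series ∑_k (R/r_k)^{n_k} converges, so that f(z) = ∏_{k=1}^∞ (1 − (z/r_k)^{n_k}) defines an entire function. Then for every z ∈ ℂ with f(z) ≠ 0, the logarithmic derivative of f satisfies z f'(z)/f(z) = ∑_{j=1}^∞ n_j (z/r_j)^{n_j} / ((z/r_j)^{n_j} − 1), the series converging absolutely. -/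
/-!
On a compact set `‖z‖ ≤ R` the factors satisfy `‖(z / r_k) ^ n_k‖ ≤ (R / r_k) ^ n_k`, a summable
bound, so the partial products converge locally uniformly on `ℂ`. Logarithmic derivatives of
locally uniformly convergent holomorphic functions converge, and that of a finite product is the
sum of those of the factors; the factor `1 - q_k`, `q_k = (w / r_k) ^ n_k`, contributes
`n_k q_k / (q_k - 1)` to `w f'(w) / f(w)`. Absolute convergence comes from
`n_k ‖q_k‖ ≤ (2 ‖w‖ / r_k) ^ n_k` (as `n ≤ 2 ^ n`) and `‖q_k - 1‖ ≥ 1 / 2` for all but finitely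
many `k`.
-/

open Filter Complex Topology Set

theorem HasProd.apply_ne_zero_s9 {α β : Type*} [CommMonoidWithZero α] [TopologicalSpace α]
    [T2Space α] {f : β → α} {a : α} (hf : HasProd f a) (ha : a ≠ 0) (b : β) : f b ≠ 0 :=
  fun hb => ha (hf.unique (hasProd_zero_of_exists_eq_zero ⟨b, hb⟩))

theorem HasProdLocallyUniformlyOn.hasSum_logDeriv {ι : Type*} {F : ι → ℂ → ℂ} {f : ℂ → ℂ}
    {s : Set ℂ} (h : HasProdLocallyUniformlyOn F f s) (hs : IsOpen s) {x : ℂ} (hx : x ∈ s)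
    (hd : ∀ i, DifferentiableOn ℂ (F i) s) (hF : ∀ i, F i x ≠ 0) (hf : f x ≠ 0) :
    HasSum (fun i => logDeriv (F i) x) (logDeriv f x) := by
  refine (logDeriv_tendsto hs hx h (.of_forall fun t => ?_) hf).congr fun t => ?_
  · exact DifferentiableOn.fun_finsetProd fun i _ => hd i
  · exact logDeriv_prod (fun i _ => hF i) fun i _ => (hd i x hx).differentiableAt (hs.mem_nhds hx)

/-- Where `(w / c) ^ m = 1`, both sides are `0` by the convention `x / 0 = 0`. -/
theorem mul_logDeriv_one_sub_div_pow (c w : ℂ) (m : ℕ) :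
    w * logDeriv (fun z => 1 - (z / c) ^ m) w = m * (w / c) ^ m / ((w / c) ^ m - 1) := by
  rcases m with _ | m
  · simp
  have hd : HasDerivAt (fun z => 1 - (z / c) ^ (m + 1)) (-((m + 1 : ℕ) * (w / c) ^ m * c⁻¹)) w := by
    simpa using (((hasDerivAt_id w).div_const c).pow (m + 1)).const_sub 1
  rw [logDeriv_apply, hd.deriv, ← neg_sub, div_neg_eq_neg_div, neg_div, neg_neg, ← mul_div_assoc]
  ring

theorem summable_norm_div_sub_one {ι 𝕜 : Type*} [NormedField 𝕜] {a q : ι → 𝕜}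
    (ha : Summable fun i => ‖a i‖) (hq : Tendsto q cofinite (𝓝 0)) :
    Summable fun i => ‖a i / (q i - 1)‖ := by
  refine (ha.mul_left 2).of_norm_bounded_eventually ?_
  filter_upwards [hq.norm.eventually (gt_mem_nhds (show ‖(0 : 𝕜)‖ < 1 / 2 by simp))] with i hi
  have hden : 1 / 2 ≤ ‖q i - 1‖ := by
    have := norm_sub_norm_le (1 : 𝕜) (q i)
    rw [norm_one, norm_sub_rev] at this
    linarith
  rw [norm_norm, norm_div, div_le_iff₀ (by linarith)]
  nlinarith [norm_nonneg (a i)]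

theorem summable_norm_natCast_mul_pow_div_pow_sub_one {ι 𝕜 : Type*} [NormedField 𝕜]
    {x : ι → 𝕜} {n : ι → ℕ} (hx : Summable fun i => (2 * ‖x i‖) ^ n i) :
    Summable fun i => ‖(n i : 𝕜) * x i ^ n i / (x i ^ n i - 1)‖ := by
  have hle : ∀ i, ‖x i ^ n i‖ ≤ (2 * ‖x i‖) ^ n i := fun i => by
    rw [norm_pow]
    exact pow_le_pow_left₀ (norm_nonneg _) (by linarith [norm_nonneg (x i)]) _
  refine summable_norm_div_sub_one (hx.of_nonneg_of_le (fun _ => norm_nonneg _) fun i => ?_) ?_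
  · calc ‖(n i : 𝕜) * x i ^ n i‖ ≤ n i * ‖x i‖ ^ n i := by
          rw [norm_mul, norm_pow]
          gcongr
          simpa using Nat.norm_cast_le (α := 𝕜) (n i)
      _ ≤ 2 ^ n i * ‖x i‖ ^ n i := by
          gcongr
          exact_mod_cast (Nat.lt_two_pow_self).le
      _ = (2 * ‖x i‖) ^ n i := (mul_pow _ _ _).symm
  · exact tendsto_zero_iff_norm_tendsto_zero.mpr
      (squeeze_zero (fun _ => norm_nonneg _) hle hx.tendsto_cofinite_zero)

theorem norm_div_ofReal_of_pos (z : ℂ) {r : ℝ} (hr : 0 < r) : ‖z / (r : ℂ)‖ = ‖z‖ / r := by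
  rw [norm_div, norm_real, Real.norm_of_nonneg hr.le]

theorem hasProdLocallyUniformlyOn_one_sub_div_pow {ι : Type*} (r : ι → ℝ) (hr : ∀ k, 0 < r k)
    (n : ι → ℕ) (hconv : ∀ R : ℝ, 0 < R → Summable fun k => (R / r k) ^ n k) :
    HasProdLocallyUniformlyOn (fun k z => 1 - (z / (r k : ℂ)) ^ n k)
      (fun z => ∏' k, (1 - (z / (r k : ℂ)) ^ n k)) univ := by
  refine hasProdLocallyUniformlyOn_of_forall_compact isOpen_univ fun K _ hK => ?_
  obtain ⟨R, hR, hKR⟩ := hK.isBounded.subset_closedBall_lt 0 0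
  have hbound : ∀ᶠ k in cofinite, ∀ z ∈ K, ‖-(z / (r k : ℂ)) ^ n k‖ ≤ (R / r k) ^ n k :=
    .of_forall fun k z hz => by
      rw [norm_neg, norm_pow, norm_div_ofReal_of_pos _ (hr k)]
      exact pow_le_pow_left₀ (div_nonneg (norm_nonneg z) (hr k).le)
        (div_le_div_of_nonneg_right (by simpa using hKR hz) (hr k).le) _
  simpa only [← sub_eq_add_neg] using
    (hconv R hR).hasProdUniformlyOn_one_add hK hbound fun k => by fun_prop

theorem stmt9_general
    (r : ℕ → ℝ) (hrpos : ∀ k, 0 < r k)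
    (n : ℕ → ℕ)
    (hconv : ∀ R : ℝ, 0 < R → Summable (fun k => (R / r k) ^ (n k)))
    (f : ℂ → ℂ)
    (hprod : ∀ w : ℂ, HasProd (fun k => 1 - (w / (r k : ℂ)) ^ (n k)) (f w))
    (w : ℂ) (hw : f w ≠ 0) :
    Summable (fun j =>
      ‖(n j : ℂ) * (w / (r j : ℂ)) ^ (n j) / ((w / (r j : ℂ)) ^ (n j) - 1)‖) ∧
    w * deriv f w / f w =
      ∑' j, (n j : ℂ) * (w / (r j : ℂ)) ^ (n j) / ((w / (r j : ℂ)) ^ (n j) - 1) := by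
  have hloc : HasProdLocallyUniformlyOn (fun k z => 1 - (z / (r k : ℂ)) ^ n k) f univ :=
    TendstoLocallyUniformlyOn.congr_right
      (hasProdLocallyUniformlyOn_one_sub_div_pow r hrpos n hconv)
      fun z _ => (hprod z).tprod_eq
  have hlog := (hloc.hasSum_logDeriv isOpen_univ (mem_univ w) (fun k => by fun_prop)
    ((hprod w).apply_ne_zero_s9 hw) hw).mul_left w
  simp only [mul_logDeriv_one_sub_div_pow] at hlog
  refine ⟨summable_norm_natCast_mul_pow_div_pow_sub_one ?_, ?_⟩
  · refine (hconv (2 * ‖w‖ + 1) (by positivity)).of_nonneg_of_le (fun _ => by positivity)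
      fun k => ?_
    rw [norm_div_ofReal_of_pos _ (hrpos k), ← mul_div_assoc]
    exact pow_le_pow_left₀ (div_nonneg (by positivity) (hrpos k).le)
      (div_le_div_of_nonneg_right (by linarith) (hrpos k).le) _
  · rw [hlog.tsum_eq, logDeriv_apply, mul_div_assoc]

theorem stmt9
    (r : ℕ → ℝ) (hr : StrictMono r) (hrpos : ∀ k, 0 < r k)
    (n : ℕ → ℕ)
    (hconv : ∀ R : ℝ, 0 < R → Summable (fun k => (R / r k) ^ (n k)))
    (f : ℂ → ℂ) (hf : Differentiable ℂ f)
    (hprod : ∀ w : ℂ, HasProd (fun k => 1 - (w / (r k : ℂ)) ^ (n k)) (f w))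
    (w : ℂ) (hw : f w ≠ 0) :
    Summable (fun j =>
      ‖(n j : ℂ) * (w / (r j : ℂ)) ^ (n j) / ((w / (r j : ℂ)) ^ (n j) - 1)‖) ∧
    w * deriv f w / f w =
      ∑' j, (n j : ℂ) * (w / (r j : ℂ)) ^ (n j) / ((w / (r j : ℂ)) ^ (n j) - 1) :=
  stmt9_general r hrpos n hconv f hprod w hw
end
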